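/- For all nonnegative integers k₀, k₁, k₂ with k₀+k₁+k₂ = k, every α ∈ Δ₊, and every integer m ≥ 0: τ_{λ₁}(x_α(m)) · x_{α₁}(−1)^{k₁} · x_{α₁+α₂}(−1)^{k₂} ∈ I_{k₂Λ₀+k₀Λ₁+k₁Λ₂}. Explicitly: x_{α₁}(m−1)·x_{α₁}(−1)^{k₁}x_{α₁+α₂}(−1)^{k₂}, x_{α₂}(m)·x_{α₁}(−1)^{k₁}x_{α₁+α₂}(−1)^{k₂}, and x_{α₁+α₂}(m−1)·x_{α₁}(−1)^{k₁}x_{α₁+α₂}(−1)^{k₂} all lie in I_{k₂Λ₀+k₀Λ₁+k₁Λ₂}. -/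

import Mathlib

/- Setup: the nilpotent subalgebra 𝔫 ⊂ 𝔰𝔩(3,ℂ) spanned by E₁₂, E₂₃, E₁₃, its loop
algebra 𝔫̄ = 𝔫 ⊗ ℂ[t,t⁻¹], and the universal enveloping algebra U(𝔫̄). -/

noncomputable section
open scoped TensorProduct

attribute [local instance 100] LieRing.ofAssociativeRing

namespace PrincipalSubspaceSL3

/-- 3×3 complex matrices. -/
abbrev gl3 : Type := Matrix (Fin 3) (Fin 3) ℂ

/-- The root vectors: `Egen 0 = x_{α₁} = E₁₂`, `Egen 1 = x_{α₂} = E₂₃`,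
`Egen 2 = x_{α₁+α₂} = E₁₃`. -/
def Egen : Fin 3 → gl3
  | 0 => Matrix.single 0 1 1
  | 1 => Matrix.single 1 2 1
  | 2 => Matrix.single 0 2 1

lemma egen_lie_mem :
    ∀ x ∈ Submodule.span ℂ (Set.range Egen), ∀ y ∈ Submodule.span ℂ (Set.range Egen),
      ⁅x, y⁆ ∈ Submodule.span ℂ (Set.range Egen) := by
  have key : ∀ a b : Fin 3, ⁅Egen a, Egen b⁆ ∈ Submodule.span ℂ (Set.range Egen) := by
    intro a b
    fin_cases a <;> fin_cases b <;>
      simp only [Egen, Ring.lie_def, Matrix.single_mul_single_same,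
        Matrix.single_mul_single_of_ne, Fin.reduceEq, ne_eq, not_false_eq_true,
        one_mul, sub_zero, zero_sub, sub_self] <;>
      first
        | exact Submodule.zero_mem _
        | exact Submodule.subset_span ⟨2, rfl⟩
        | exact Submodule.neg_mem _ (Submodule.subset_span ⟨2, rfl⟩)
  intro x hx
  induction hx using Submodule.span_induction with
  | mem x hxs =>
      obtain ⟨a, rfl⟩ := hxs
      intro y hy
      induction hy using Submodule.span_induction with
      | mem y hys => obtain ⟨b, rfl⟩ := hys; exact key a b
      | zero => simp
      | add y z hy hz hy' hz' => rw [lie_add]; exact Submodule.add_mem _ hy' hz'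
      | smul c y hy hy' => rw [lie_smul]; exact Submodule.smul_mem _ _ hy'
  | zero => intro y hy; simp
  | add x z hx hz hx' hz' =>
      intro y hy; rw [add_lie]; exact Submodule.add_mem _ (hx' y hy) (hz' y hy)
  | smul c x hx hx' =>
      intro y hy; rw [smul_lie]; exact Submodule.smul_mem _ _ (hx' y hy)

/-- The nilpotent Lie subalgebra 𝔫 = ℂE₁₂ ⊕ ℂE₂₃ ⊕ ℂE₁₃ of 𝔰𝔩(3,ℂ). -/
def nn : LieSubalgebra ℂ gl3 :=
  { Submodule.span ℂ (Set.range Egen) with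
    lie_mem' := fun {x y} hx hy => egen_lie_mem x hx y hy }

/-- Laurent polynomials ℂ[t, t⁻¹]. -/
abbrev A : Type := LaurentPolynomial ℂ

/-- The loop algebra 𝔫̄ = 𝔫 ⊗ ℂ[t,t⁻¹]. -/
abbrev nbar : Type := A ⊗[ℂ] nn

set_option synthInstance.maxHeartbeats 1000000 in
instance : LieAlgebra ℂ nbar where
  lie_smul c x y := by
    have h := lie_smul (algebraMap ℂ A c) x y
    rwa [algebraMap_smul, algebraMap_smul] at h

/-- The root vectors as elements of 𝔫. -/
def en (i : Fin 3) : nn := ⟨Egen i, Submodule.subset_span ⟨i, rfl⟩⟩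

/-- `nx i m` is the element x_{α}(m) = x_α ⊗ tᵐ of 𝔫̄, where α is α₁, α₂, α₁+α₂
according to i = 0, 1, 2. -/
def nx (i : Fin 3) (m : ℤ) : nbar := LaurentPolynomial.T m ⊗ₜ[ℂ] en i

/-- The universal enveloping algebra U(𝔫̄). -/
abbrev U : Type := UniversalEnvelopingAlgebra ℂ nbar

/-- `xg i m` is the element x_α(m) regarded inside U(𝔫̄). -/
def xg (i : Fin 3) (m : ℤ) : U := UniversalEnvelopingAlgebra.ι ℂ (nx i m)

/-- `Rtr k i t` = R^i_{-1,t} : the sum of x_{α_i}(m₁)⋯x_{α_i}(m_{k+1}) over all integer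
tuples with every m_j ≤ -1 and m₁+⋯+m_{k+1} = -t (parametrized by m_j = -1 - n_j with
n : Fin (k+1) → ℕ, ∑ n = t - (k+1)).  Here i : Fin 2 refers to the simple root α_{i+1}. -/
def Rtr (k : ℕ) (i : Fin 2) (t : ℤ) : U :=
  ∑ f ∈ Finset.Nat.antidiagonalTuple (k + 1) (t - (k + 1)).toNat,
    (List.ofFn fun j : Fin (k + 1) => xg i.castSucc (-1 - (f j : ℤ))).prod

/-- The left ideal J = Σ_{i,t≥k+1} U(𝔫̄)·R^i_{-1,t}. -/
def Jid (k : ℕ) : Submodule U U :=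
  Submodule.span U {u : U | ∃ i : Fin 2, ∃ t : ℤ, (k : ℤ) + 1 ≤ t ∧ u = Rtr k i t}

/-- The left ideal U(𝔫̄)·𝔫̄₊, generated by the x_α(m) with m ≥ 0. -/
def nplusIdeal : Submodule U U :=
  Submodule.span U {u : U | ∃ i : Fin 3, ∃ m : ℤ, 0 ≤ m ∧ u = xg i m}

/-- The left ideal I_{kΛ₀} = J + U(𝔫̄)·𝔫̄₊. -/
def IkL0 (k : ℕ) : Submodule U U := Jid k ⊔ nplusIdeal

/-- The left ideal I_{k₀Λ₀+k₁Λ₁+k₂Λ₂} = I_{kΛ₀} + U·x_{α₁}(-1)^{k₀+k₂+1}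
+ U·x_{α₂}(-1)^{k₀+k₁+1} + U·x_{α₁+α₂}(-1)^{k₀+1} (with k = k₀+k₁+k₂). -/
def Iwt (k k0 k1 k2 : ℕ) : Submodule U U :=
  IkL0 k ⊔ Submodule.span U {xg 0 (-1) ^ (k0 + k2 + 1)}
    ⊔ Submodule.span U {xg 1 (-1) ^ (k0 + k1 + 1)}
    ⊔ Submodule.span U {xg 2 (-1) ^ (k0 + 1)}

lemma mul_pow_succ_eq_of_mul_eq_add {R : Type*} [Ring R] {x y z : R}
    (h : y * x = x * y + z) (hxz : Commute x z) (n : ℕ) :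
    y * x ^ (n + 1) = x ^ (n + 1) * y + (n + 1) • (x ^ n * z) := by
  induction n with
  | zero => simpa using h
  | succ n ih =>
    calc y * x ^ (n + 1 + 1)
        = x ^ (n + 1) * (y * x) + (n + 1) • (x ^ n * (z * x)) := by
          rw [pow_succ x (n + 1), ← mul_assoc, ih, add_mul, smul_mul_assoc, mul_assoc,
            mul_assoc]
      _ = x ^ (n + 1 + 1) * y + (n + 1 + 1) • (x ^ (n + 1) * z) := by
          rw [h, ← hxz.eq, mul_add, ← mul_assoc, ← mul_assoc, ← pow_succ, ← pow_succ,
            succ_nsmul _ (n + 1), add_assoc, add_comm (x ^ (n + 1) * z)]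

lemma lie_en_zero_one : ⁅en 0, en 1⁆ = en 2 := by
  apply Subtype.ext
  show ⁅Egen 0, Egen 1⁆ = Egen 2
  simp [Egen, Ring.lie_def, Matrix.single_mul_single_of_ne]

lemma lie_en_zero_two : ⁅en 0, en 2⁆ = 0 := by
  apply Subtype.ext
  show ⁅Egen 0, Egen 2⁆ = 0
  simp [Egen, Ring.lie_def, Matrix.single_mul_single_of_ne]

lemma lie_en_one_two : ⁅en 1, en 2⁆ = 0 := by
  apply Subtype.ext
  show ⁅Egen 1, Egen 2⁆ = 0
  simp [Egen, Ring.lie_def, Matrix.single_mul_single_of_ne]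

lemma xg_mul_sub_mul (i j : Fin 3) (a b : ℤ) :
    xg i a * xg j b - xg j b * xg i a =
      UniversalEnvelopingAlgebra.ι ℂ ((LaurentPolynomial.T (a + b) : A) ⊗ₜ[ℂ] ⁅en i, en j⁆) := by
  rw [← Ring.lie_def, xg, xg, ← LieHom.map_lie, LaurentPolynomial.T_add]
  rfl

lemma commute_xg_of_lie_eq_zero {i j : Fin 3} (h : ⁅en i, en j⁆ = 0) (a b : ℤ) :
    Commute (xg i a) (xg j b) := by
  have := xg_mul_sub_mul i j a b
  rwa [h, TensorProduct.tmul_zero, map_zero, sub_eq_zero] at this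

lemma commute_xg_self (i : Fin 3) (a b : ℤ) : Commute (xg i a) (xg i b) :=
  commute_xg_of_lie_eq_zero (lie_self _) a b

lemma commute_xg_zero_xg_two (a b : ℤ) : Commute (xg 0 a) (xg 2 b) :=
  commute_xg_of_lie_eq_zero lie_en_zero_two a b

lemma commute_xg_one_xg_two (a b : ℤ) : Commute (xg 1 a) (xg 2 b) :=
  commute_xg_of_lie_eq_zero lie_en_one_two a b

lemma xg_one_mul_xg_zero (a b : ℤ) : xg 1 a * xg 0 b = xg 0 b * xg 1 a + -xg 2 (b + a) := by
  have := xg_mul_sub_mul 1 0 a b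
  rw [← lie_skew, lie_en_zero_one, TensorProduct.tmul_neg, map_neg, add_comm] at this
  exact eq_add_of_sub_eq' this

lemma xg_one_mul_xg_zero_pow_mul_xg_two_pow (m : ℤ) (a b : ℕ) :
    xg 1 m * xg 0 (-1) ^ (a + 1) * xg 2 (-1) ^ b =
      xg 0 (-1) ^ (a + 1) * xg 2 (-1) ^ b * xg 1 m
        - (a + 1) • (xg 0 (-1) ^ a * xg 2 (m - 1) * xg 2 (-1) ^ b) := by
  have hpow := mul_pow_succ_eq_of_mul_eq_add (xg_one_mul_xg_zero m (-1))
    ((commute_xg_zero_xg_two _ _).neg_right) a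
  rw [hpow, add_mul, mul_assoc _ (xg 1 m), ((commute_xg_one_xg_two m (-1)).pow_right b).eq,
    ← mul_assoc, smul_mul_assoc, mul_neg, neg_mul, smul_neg, ← sub_eq_add_neg,
    add_comm (-1) m, ← sub_eq_add_neg]

lemma xg_mem_nplusIdeal (i : Fin 3) {m : ℤ} (hm : 0 ≤ m) : xg i m ∈ nplusIdeal :=
  Submodule.subset_span ⟨i, m, hm, rfl⟩

section Iwt

variable (k k0 k1 k2 : ℕ)

lemma nplusIdeal_le_Iwt : nplusIdeal ≤ Iwt k k0 k1 k2 :=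
  le_sup_right.trans (le_sup_left.trans (le_sup_left.trans le_sup_left))

lemma xg_zero_pow_mem_Iwt : xg 0 (-1) ^ (k0 + k2 + 1) ∈ Iwt k k0 k1 k2 :=
  (le_sup_right.trans (le_sup_left.trans le_sup_left) : _ ≤ Iwt k k0 k1 k2)
    (Submodule.mem_span_singleton_self _)

lemma xg_two_pow_mem_Iwt : xg 2 (-1) ^ (k0 + 1) ∈ Iwt k k0 k1 k2 :=
  (le_sup_right : _ ≤ Iwt k k0 k1 k2) (Submodule.mem_span_singleton_self _)

variable {k k0 k1 k2}

lemma xg_mul_mem_Iwt_of_commute {i : Fin 3} {p : ℤ} (hp : 0 ≤ p) {v : U}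
    (h : Commute (xg i p) v) : xg i p * v ∈ Iwt k k0 k1 k2 := by
  rw [h.eq]
  exact Ideal.mul_mem_left _ v (nplusIdeal_le_Iwt k k0 k1 k2 (xg_mem_nplusIdeal i hp))

lemma mem_Iwt_of_nsmul_mem {v : U} {n : ℕ} (h : (n + 1) • v ∈ Iwt k k0 k1 k2) :
    v ∈ Iwt k k0 k1 k2 := by
  rw [← Nat.cast_smul_eq_nsmul ℂ] at h
  exact ((Iwt k k0 k1 k2).smul_mem_iff' (Units.mk0 ((n + 1 : ℕ) : ℂ) (Nat.cast_ne_zero.mpr n.succ_ne_zero))).mp h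

/- Since x_{α₂}(0) ∈ I, commuting it past x_{α₁}(-1)^{a+1} x_{α₁+α₂}(-1)^b trades one
x_{α₁}(-1) for one x_{α₁+α₂}(-1); start from the generator x_{α₁}(-1)^{k₀+k₂+1}. -/
lemma xg_zero_pow_mul_xg_two_pow_mem_Iwt {a b : ℕ} (hab : a + b = k0 + k2 + 1) :
    xg 0 (-1) ^ a * xg 2 (-1) ^ b ∈ Iwt k k0 k1 k2 := by
  induction b generalizing a with
  | zero =>
    obtain rfl : a = k0 + k2 + 1 := hab
    simpa using xg_zero_pow_mem_Iwt k k0 k1 k2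
  | succ b ih =>
    have hprev : xg 0 (-1) ^ (a + 1) * xg 2 (-1) ^ b ∈ Iwt k k0 k1 k2 := ih (by omega)
    have hmove := xg_one_mul_xg_zero_pow_mul_xg_two_pow 0 a b
    rw [zero_sub, mul_assoc _ (xg 2 (-1)), ← pow_succ'] at hmove
    refine mem_Iwt_of_nsmul_mem (n := a) ?_
    rw [← sub_sub_cancel (_ * xg 1 0) ((a + 1) • _), ← hmove, mul_assoc (xg 1 0)]
    exact sub_mem (Ideal.mul_mem_left _ _ (nplusIdeal_le_Iwt k k0 k1 k2
      (xg_mem_nplusIdeal 1 le_rfl))) (Ideal.mul_mem_left _ _ hprev)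

lemma mul_xg_two_mul_xg_two_pow_mem_Iwt (u : U) {m : ℤ} (hm : 0 ≤ m) :
    u * xg 2 (m - 1) * xg 2 (-1) ^ k0 ∈ Iwt k k0 k1 k2 := by
  rw [mul_assoc]
  refine Ideal.mul_mem_left _ u ?_
  rcases hm.eq_or_lt with rfl | hm
  · rw [zero_sub, ← pow_succ']
    exact xg_two_pow_mem_Iwt k k0 k1 k2
  · exact xg_mul_mem_Iwt_of_commute (by omega) ((commute_xg_self 2 _ _).pow_right k0)

lemma xg_zero_mul_mem_Iwt {m : ℤ} (hm : 0 ≤ m) :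
    xg 0 (m - 1) * xg 0 (-1) ^ k2 * xg 2 (-1) ^ k0 ∈ Iwt k k0 k1 k2 := by
  rcases hm.eq_or_lt with rfl | hm
  · rw [zero_sub, ← pow_succ']
    exact xg_zero_pow_mul_xg_two_pow_mem_Iwt (by omega)
  · rw [mul_assoc]
    exact xg_mul_mem_Iwt_of_commute (by omega)
      (((commute_xg_self 0 _ _).pow_right k2).mul_right
        ((commute_xg_zero_xg_two _ _).pow_right k0))

lemma xg_one_mul_mem_Iwt {m : ℤ} (hm : 0 ≤ m) :
    xg 1 m * xg 0 (-1) ^ k2 * xg 2 (-1) ^ k0 ∈ Iwt k k0 k1 k2 := by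
  cases k2 with
  | zero =>
    rw [pow_zero, mul_one]
    exact xg_mul_mem_Iwt_of_commute hm ((commute_xg_one_xg_two _ _).pow_right k0)
  | succ a =>
    rw [xg_one_mul_xg_zero_pow_mul_xg_two_pow]
    exact sub_mem
      (Ideal.mul_mem_left _ _ (nplusIdeal_le_Iwt _ _ _ _ (xg_mem_nplusIdeal 1 hm)))
      (nsmul_mem (mul_xg_two_mul_xg_two_pow_mem_Iwt _ hm) _)

lemma xg_two_mul_mem_Iwt {m : ℤ} (hm : 0 ≤ m) :
    xg 2 (m - 1) * xg 0 (-1) ^ k2 * xg 2 (-1) ^ k0 ∈ Iwt k k0 k1 k2 := by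
  rw [((commute_xg_zero_xg_two _ _).symm.pow_right k2).eq]
  exact mul_xg_two_mul_xg_two_pow_mem_Iwt _ hm

end Iwt

theorem statement12_general (k : ℕ) (k0 k1 k2 : ℕ)
    (m : ℤ) (hm : 0 ≤ m) :
    xg 0 (m - 1) * xg 0 (-1) ^ k1 * xg 2 (-1) ^ k2 ∈ Iwt k k2 k0 k1 ∧
      xg 1 m * xg 0 (-1) ^ k1 * xg 2 (-1) ^ k2 ∈ Iwt k k2 k0 k1 ∧
      xg 2 (m - 1) * xg 0 (-1) ^ k1 * xg 2 (-1) ^ k2 ∈ Iwt k k2 k0 k1 :=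
  ⟨xg_zero_mul_mem_Iwt hm, xg_one_mul_mem_Iwt hm, xg_two_mul_mem_Iwt hm⟩

/-- for k₀+k₁+k₂ = k, every α ∈ Δ₊ and every m ≥ 0,
τ_{λ₁}(x_α(m))·x_{α₁}(−1)^{k₁}·x_{α₁+α₂}(−1)^{k₂} ∈ I_{k₂Λ₀+k₀Λ₁+k₁Λ₂}; explicitly,
x_{α₁}(m−1)·x_{α₁}(−1)^{k₁}x_{α₁+α₂}(−1)^{k₂}, x_{α₂}(m)·x_{α₁}(−1)^{k₁}x_{α₁+α₂}(−1)^{k₂}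
and x_{α₁+α₂}(m−1)·x_{α₁}(−1)^{k₁}x_{α₁+α₂}(−1)^{k₂} all lie in I_{k₂Λ₀+k₀Λ₁+k₁Λ₂}. -/
theorem statement12 (k : ℕ) (hk : 0 < k) (k0 k1 k2 : ℕ) (hsum : k0 + k1 + k2 = k)
    (m : ℤ) (hm : 0 ≤ m) :
    xg 0 (m - 1) * xg 0 (-1) ^ k1 * xg 2 (-1) ^ k2 ∈ Iwt k k2 k0 k1 ∧
      xg 1 m * xg 0 (-1) ^ k1 * xg 2 (-1) ^ k2 ∈ Iwt k k2 k0 k1 ∧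
      xg 2 (m - 1) * xg 0 (-1) ^ k1 * xg 2 (-1) ^ k2 ∈ Iwt k k2 k0 k1 :=
  statement12_general k k0 k1 k2 m hm

end PrincipalSubspaceSL3
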